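/- arXiv:2305.16352 — 2 statements merged into one kernel-verified Lean document; each statement's English description precedes it below -/
import Mathlib

section
/- Let $\alpha,\beta>1$, $p=\alpha+\beta$. Suppose $u_n\rightharpoonup u$ and $v_n\rightharpoonup v$ weakly in $H^1(\mathbb{R}^N)$, $u_n\to u$ and $v_n\to v$ a.e. in $\mathbb{R}^N$, with $\{u_n\},\{v_n\}$ bounded in $L^p(\mathbb{R}^N)$. Then $\lim_{n\to\infty}\Big(\int_{\mathbb{R}^N}|u_n|^\alpha|v_n|^\beta-\int_{\mathbb{R}^N}|u_n-u|^\alpha|v_n-v|^\beta\Big)=\int_{\mathbb{R}^N}|u|^\alpha|v|^\beta$. -/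
set_option maxHeartbeats 1000000

open MeasureTheory Real Filter
open scoped RealInnerProductSpace

/-- Weak convergence in `H¹(ℝᴺ)`: weak `L²`-convergence of the functions and of
their gradients, against arbitrary `L²` test functions. -/
def WeakH1Conv (N : ℕ) (un : ℕ → EuclideanSpace ℝ (Fin N) → ℝ)
    (u : EuclideanSpace ℝ (Fin N) → ℝ) : Prop :=
  (∀ φ : EuclideanSpace ℝ (Fin N) → ℝ, MemLp φ 2 volume →
    Tendsto (fun n => ∫ x, un n x * φ x) atTop (nhds (∫ x, u x * φ x))) ∧
  (∀ Φ : EuclideanSpace ℝ (Fin N) → EuclideanSpace ℝ (Fin N), MemLp Φ 2 volume →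
    Tendsto (fun n => ∫ x, ⟪gradient (un n) x, Φ x⟫) atTop
      (nhds (∫ x, ⟪gradient u x, Φ x⟫)))

lemma lemA (α : ℝ) (hα : 0 < α) (δ : ℝ) (hδ : 0 < δ) :
    ∃ C : ℝ, 0 ≤ C ∧ ∀ s t : ℝ, 0 ≤ s → 0 ≤ t →
      (s + t) ^ α ≤ (1 + δ) * s ^ α + C * t ^ α := by
  set η : ℝ := (1 + δ) ^ α⁻¹ - 1 with hηdef
  have h1δ : (1:ℝ) < 1 + δ := by linarith
  have hη : 0 < η := by
    have : (1:ℝ) < (1 + δ) ^ α⁻¹ :=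
      Real.one_lt_rpow_iff_of_pos (by linarith) |>.2 (Or.inl ⟨h1δ, by positivity⟩)
    simp [hηdef]; linarith
  have hηα : (1 + η) ^ α = 1 + δ := by
    have : (1:ℝ) + η = (1 + δ) ^ α⁻¹ := by simp [hηdef]
    rw [this, Real.rpow_inv_rpow (by linarith) (ne_of_gt hα)]
  refine ⟨(1 + η⁻¹) ^ α, by positivity, fun s t hs ht => ?_⟩
  rcases le_or_gt t (η * s) with h | h
  · have h1 : s + t ≤ (1 + η) * s := by nlinarith
    calc (s + t) ^ α ≤ ((1 + η) * s) ^ α :=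
          Real.rpow_le_rpow (by linarith) h1 hα.le
      _ = (1 + η) ^ α * s ^ α := Real.mul_rpow (by linarith) hs
      _ = (1 + δ) * s ^ α := by rw [hηα]
      _ ≤ (1 + δ) * s ^ α + (1 + η⁻¹) ^ α * t ^ α :=
          le_add_of_nonneg_right (by positivity)
  · have hs' : s ≤ t / η := by
      rw [le_div_iff₀ hη]; nlinarith
    have h1 : s + t ≤ (1 + η⁻¹) * t := by
      have : t / η = η⁻¹ * t := by field_simp
      nlinarith [this ▸ hs']
    calc (s + t) ^ α ≤ ((1 + η⁻¹) * t) ^ α :=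
          Real.rpow_le_rpow (by linarith) h1 hα.le
      _ = (1 + η⁻¹) ^ α * t ^ α := Real.mul_rpow (by positivity) ht
      _ ≤ (1 + δ) * s ^ α + (1 + η⁻¹) ^ α * t ^ α :=
          le_add_of_nonneg_left (by positivity)

lemma lemD (α : ℝ) (hα : 0 < α) (ε : ℝ) (hε : 0 < ε) :
    ∃ C : ℝ, 0 ≤ C ∧ ∀ a w : ℝ,
      |(|a + w| ^ α - |a| ^ α)| ≤ ε * |a| ^ α + C * |w| ^ α := by
  set δ : ℝ := ε / (1 + ε) with hδdef
  have hδ : 0 < δ := by positivity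
  have hδε : δ ≤ ε := by
    rw [hδdef, div_le_iff₀ (by positivity)]; nlinarith
  obtain ⟨C1, hC1, hA⟩ := lemA α hα δ hδ
  refine ⟨(1 + δ) * C1, by positivity, fun a w => ?_⟩
  set s := |a| with hs
  set t := |w| with ht
  have hs0 : 0 ≤ s := abs_nonneg a
  have ht0 : 0 ≤ t := abs_nonneg w
  have hup : |a + w| ^ α - s ^ α ≤ ε * s ^ α + (1 + δ) * C1 * t ^ α := by
    have h1 : |a + w| ≤ s + t := abs_add_le a w
    have h2 : |a + w| ^ α ≤ (s + t) ^ α :=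
      Real.rpow_le_rpow (abs_nonneg _) h1 hα.le
    have h3 := hA s t hs0 ht0
    have hC1t : C1 * t ^ α ≤ (1 + δ) * C1 * t ^ α := by
      nlinarith [mul_nonneg hC1 (Real.rpow_nonneg ht0 α)]
    nlinarith [Real.rpow_nonneg hs0 α]
  have hlo : s ^ α - |a + w| ^ α ≤ ε * s ^ α + (1 + δ) * C1 * t ^ α := by
    have h1 : s ≤ |a + w| + t := by
      have := abs_add_le (a + w) (-w); simp at this; simpa [hs, ht] using this
    have h2 : s ^ α ≤ (|a + w| + t) ^ α :=
      Real.rpow_le_rpow hs0 h1 hα.le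
    have h3 := hA (|a + w|) t (abs_nonneg _) ht0
    have h4 : |a + w| ^ α ≤ (1 + δ) * s ^ α + C1 * t ^ α := by
      have := hA s t hs0 ht0
      have h2' : |a + w| ^ α ≤ (s + t) ^ α :=
        Real.rpow_le_rpow (abs_nonneg _) (abs_add_le a w) hα.le
      linarith
    have hδδ : δ * (1 + δ) ≤ ε := by
      have : δ * (1 + δ) ≤ δ * (1 + ε) := by nlinarith
      rw [hδdef] at this ⊢
      calc ε / (1+ε) * (1 + ε/(1+ε)) ≤ ε/(1+ε) * (1+ε) := this
        _ = ε := by field_simp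
    nlinarith [Real.rpow_nonneg hs0 α, Real.rpow_nonneg ht0 α,
      Real.rpow_nonneg (abs_nonneg (a+w)) α]
  rw [abs_le]; constructor <;> nlinarith

lemma lemB (α β : ℝ) (hα : 0 < α) (hβ : 0 < β) (s t : ℝ) (hs : 0 ≤ s) (ht : 0 ≤ t) :
    s ^ α * t ^ β ≤ s ^ (α + β) + t ^ (α + β) := by
  have hab : α + β ≠ 0 := by positivity
  rcases le_total s t with h | h
  · calc s ^ α * t ^ β ≤ t ^ α * t ^ β :=
          mul_le_mul_of_nonneg_right (Real.rpow_le_rpow hs h hα.le) (by positivity)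
      _ = t ^ (α + β) := (Real.rpow_add' ht hab).symm
      _ ≤ s ^ (α + β) + t ^ (α + β) := le_add_of_nonneg_left (by positivity)
  · calc s ^ α * t ^ β ≤ s ^ α * s ^ β :=
          mul_le_mul_of_nonneg_left (Real.rpow_le_rpow ht h hβ.le) (by positivity)
      _ = s ^ (α + β) := (Real.rpow_add' hs hab).symm
      _ ≤ s ^ (α + β) + t ^ (α + β) := le_add_of_nonneg_right (by positivity)

/-- weighted Young: small coefficient on the `s` factor. -/
lemma lemB' (α β : ℝ) (hα : 0 < α) (hβ : 0 < β) (ε : ℝ) (hε : 0 < ε) :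
    ∃ C : ℝ, 0 ≤ C ∧ ∀ s t : ℝ, 0 ≤ s → 0 ≤ t →
      s ^ α * t ^ β ≤ ε * s ^ (α + β) + C * t ^ (α + β) := by
  set p := α + β with hp
  have hp0 : 0 < p := by positivity
  set lam : ℝ := ε ^ p⁻¹ with hlam
  have hlam0 : 0 < lam := by positivity
  refine ⟨(lam ^ (-(α/β))) ^ p, by positivity, fun s t hs ht => ?_⟩
  have e1 : (lam ^ (-(α/β))) ^ β = lam ^ (-α) := by
    rw [← Real.rpow_mul hlam0.le]
    congr 1; field_simp
  have key : s ^ α * t ^ β = (lam * s) ^ α * (lam ^ (-(α/β)) * t) ^ β := by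
    rw [Real.mul_rpow hlam0.le hs, Real.mul_rpow (by positivity) ht, e1]
    have h2 : lam ^ α * s ^ α * (lam ^ (-α) * t ^ β) =
        (lam ^ α * lam ^ (-α)) * (s ^ α * t ^ β) := by ring
    rw [h2, ← Real.rpow_add hlam0]
    simp
  rw [key]
  have := lemB α β hα hβ (lam * s) (lam ^ (-(α/β)) * t) (by positivity) (by positivity)
  calc (lam * s) ^ α * (lam ^ (-(α/β)) * t) ^ β
      ≤ (lam * s) ^ p + (lam ^ (-(α/β)) * t) ^ p := this
    _ = lam ^ p * s ^ p + (lam ^ (-(α/β))) ^ p * t ^ p := by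
        rw [Real.mul_rpow hlam0.le hs, Real.mul_rpow (by positivity) ht]
    _ = ε * s ^ p + (lam ^ (-(α/β))) ^ p * t ^ p := by
        rw [hlam, Real.rpow_inv_rpow hε.le hp0.ne']

/-- weighted Young: small coefficient on the `t` factor. -/
lemma lemB'' (α β : ℝ) (hα : 0 < α) (hβ : 0 < β) (ε : ℝ) (hε : 0 < ε) :
    ∃ C : ℝ, 0 ≤ C ∧ ∀ s t : ℝ, 0 ≤ s → 0 ≤ t →
      s ^ α * t ^ β ≤ C * s ^ (α + β) + ε * t ^ (α + β) := by
  obtain ⟨C, hC, h⟩ := lemB' β α hβ hα ε hε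
  refine ⟨C, hC, fun s t hs ht => ?_⟩
  have := h t s ht hs
  rw [add_comm β α] at this
  nlinarith [this]

lemma glue (ε δ C₁ C₂ CA ε₁ ε₂ K₁ K₂ Ap Bp Wp Zp x1 x2 x3 x4 : ℝ)
    (hδ : 0 ≤ δ) (hC₁ : 0 ≤ C₁) (hC₂ : 0 ≤ C₂) (hCA : 0 ≤ CA) (hK₁ : 0 ≤ K₁) (hK₂ : 0 ≤ K₂)
    (hAp : 0 ≤ Ap) (hBp : 0 ≤ Bp) (hWp : 0 ≤ Wp) (hZp : 0 ≤ Zp)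
    (cA : δ*(1+δ) + δ + (δ*CA + C₂)*ε₁ ≤ ε)
    (cB : δ*(1+δ) + δ + C₁*(1+δ)*ε₂ ≤ ε)
    (y1 : x1 ≤ Ap + Bp) (y2 : x2 ≤ ε₁*Ap + K₁*Zp)
    (y3 : x3 ≤ K₂*Wp + ε₂*Bp) (y4 : x4 ≤ Wp + Zp) :
    δ*(1+δ)*x1 + δ*CA*x2 + C₁*(1+δ)*x3 + C₁*CA*x4 + δ*x1 + C₂*x2 ≤
      ε*(Ap + Bp) + (δ*CA*K₁ + C₂*K₁ + C₁*(1+δ)*K₂ + C₁*CA)*(Wp + Zp) := by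
  have n1 : 0 ≤ δ*(1+δ) := by positivity
  have n2 : 0 ≤ δ*CA := by positivity
  have n3 : 0 ≤ C₁*(1+δ) := by positivity
  have n4 : 0 ≤ C₁*CA := by positivity
  have m1 := mul_le_mul_of_nonneg_left y1 n1
  have m2 := mul_le_mul_of_nonneg_left y2 n2
  have m3 := mul_le_mul_of_nonneg_left y3 n3
  have m4 := mul_le_mul_of_nonneg_left y4 n4
  have m5 := mul_le_mul_of_nonneg_left y1 hδ
  have m6 := mul_le_mul_of_nonneg_left y2 hC₂
  have mA := mul_le_mul_of_nonneg_right cA hAp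
  have mB := mul_le_mul_of_nonneg_right cB hBp
  nlinarith [mul_nonneg n2 (mul_nonneg hK₁ hZp), mul_nonneg hC₂ (mul_nonneg hK₁ hZp),
    mul_nonneg n3 (mul_nonneg hK₂ hWp), mul_nonneg n4 hWp, mul_nonneg n4 hZp,
    mul_nonneg n2 (mul_nonneg hK₁ hWp), mul_nonneg hC₂ (mul_nonneg hK₁ hWp),
    mul_nonneg n3 (mul_nonneg hK₂ hZp)]

lemma star (α β : ℝ) (hα : 0 < α) (hβ : 0 < β) (ε : ℝ) (hε : 0 < ε) :
    ∃ C : ℝ, 0 ≤ C ∧ ∀ a w b z : ℝ,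
      |(|a + w| ^ α * |b + z| ^ β - |a| ^ α * |b| ^ β)| ≤
        ε * (|a| ^ (α + β) + |b| ^ (α + β)) + C * (|w| ^ (α + β) + |z| ^ (α + β)) := by
  obtain ⟨δ, hδ, hδ1, hδε⟩ : ∃ δ : ℝ, 0 < δ ∧ δ ≤ 1 ∧ δ ≤ ε/4 :=
    ⟨min (ε/4) 1, by positivity, min_le_right _ _, min_le_left _ _⟩
  obtain ⟨C₁, hC₁, hDα⟩ := lemD α hα δ hδ
  obtain ⟨C₂, hC₂, hDβ⟩ := lemD β hβ δ hδ
  obtain ⟨CA, hCA, hA⟩ := lemA β hβ δ hδ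
  obtain ⟨ε₁, hε₁, hε₁b⟩ : ∃ ε₁ : ℝ, 0 < ε₁ ∧ (δ*CA + C₂)*ε₁ ≤ ε/4 := by
    refine ⟨ε/(4*(δ*CA + C₂ + 1)), by positivity, ?_⟩
    rw [mul_div_assoc', div_le_div_iff₀ (by positivity) (by norm_num)]
    nlinarith [mul_nonneg hδ.le hCA, mul_nonneg (mul_nonneg hδ.le hCA) hε.le,
      mul_nonneg hC₂ hε.le]
  obtain ⟨ε₂, hε₂, hε₂b⟩ : ∃ ε₂ : ℝ, 0 < ε₂ ∧ C₁*(1+δ)*ε₂ ≤ ε/4 := by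
    refine ⟨ε/(4*(C₁*(1+δ) + 1)), by positivity, ?_⟩
    rw [mul_div_assoc', div_le_div_iff₀ (by positivity) (by norm_num)]
    nlinarith [mul_nonneg hC₁ hδ.le, mul_nonneg (mul_nonneg hC₁ hδ.le) hε.le,
      mul_nonneg hC₁ hε.le]
  obtain ⟨K₁, hK₁, hY₁⟩ := lemB' α β hα hβ ε₁ hε₁
  obtain ⟨K₂, hK₂, hY₂⟩ := lemB'' α β hα hβ ε₂ hε₂
  refine ⟨δ*CA*K₁ + C₂*K₁ + C₁*(1+δ)*K₂ + C₁*CA, by positivity, fun a w b z => ?_⟩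
  set A := |a| with hAdef
  set B := |b| with hBdef
  set W := |w| with hWdef
  set Z := |z| with hZdef
  have hA0 : 0 ≤ A := abs_nonneg a
  have hB0 : 0 ≤ B := abs_nonneg b
  have hW0 : 0 ≤ W := abs_nonneg w
  have hZ0 : 0 ≤ Z := abs_nonneg z
  have key : |(|a + w| ^ α * |b + z| ^ β - A ^ α * B ^ β)| ≤
      |(|a + w| ^ α - A ^ α)| * |b + z| ^ β + A ^ α * |(|b + z| ^ β - B ^ β)| := by
    have h1 : |a + w| ^ α * |b + z| ^ β - A ^ α * B ^ β =
        (|a + w| ^ α - A ^ α) * |b + z| ^ β + A ^ α * (|b + z| ^ β - B ^ β) := by ring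
    rw [h1]
    calc |(|a + w| ^ α - A ^ α) * |b + z| ^ β + A ^ α * (|b + z| ^ β - B ^ β)|
        ≤ |(|a + w| ^ α - A ^ α) * |b + z| ^ β| + |A ^ α * (|b + z| ^ β - B ^ β)| :=
          abs_add_le _ _
      _ = |(|a + w| ^ α - A ^ α)| * |b + z| ^ β + A ^ α * |(|b + z| ^ β - B ^ β)| := by
          rw [abs_mul, abs_mul, abs_of_nonneg (Real.rpow_nonneg (abs_nonneg _) β),
            abs_of_nonneg (Real.rpow_nonneg hA0 α)]
  have b1 : |(|a + w| ^ α - A ^ α)| ≤ δ * A ^ α + C₁ * W ^ α := hDα a w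
  have b2 : |b + z| ^ β ≤ (1+δ) * B ^ β + CA * Z ^ β := by
    calc |b + z| ^ β ≤ (B + Z) ^ β :=
          Real.rpow_le_rpow (abs_nonneg _) (abs_add_le b z) hβ.le
      _ ≤ (1+δ) * B ^ β + CA * Z ^ β := hA B Z hB0 hZ0
  have b3 : |(|b + z| ^ β - B ^ β)| ≤ δ * B ^ β + C₂ * Z ^ β := hDβ b z
  have step2 : |(|a + w| ^ α * |b + z| ^ β - A ^ α * B ^ β)| ≤
      (δ * A ^ α + C₁ * W ^ α) * ((1+δ) * B ^ β + CA * Z ^ β) +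
        A ^ α * (δ * B ^ β + C₂ * Z ^ β) := by
    refine key.trans (add_le_add ?_ ?_)
    · exact mul_le_mul b1 b2 (Real.rpow_nonneg (abs_nonneg _) β) (by positivity)
    · exact mul_le_mul_of_nonneg_left b3 (Real.rpow_nonneg hA0 α)
  have y1 : A ^ α * B ^ β ≤ A ^ (α+β) + B ^ (α+β) := lemB α β hα hβ A B hA0 hB0
  have y2 : A ^ α * Z ^ β ≤ ε₁ * A ^ (α+β) + K₁ * Z ^ (α+β) := hY₁ A Z hA0 hZ0
  have y3 : W ^ α * B ^ β ≤ K₂ * W ^ (α+β) + ε₂ * B ^ (α+β) := hY₂ W B hW0 hB0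
  have y4 : W ^ α * Z ^ β ≤ W ^ (α+β) + Z ^ (α+β) := lemB α β hα hβ W Z hW0 hZ0
  have expand : (δ * A ^ α + C₁ * W ^ α) * ((1+δ) * B ^ β + CA * Z ^ β) +
      A ^ α * (δ * B ^ β + C₂ * Z ^ β) =
      (δ*(1+δ)) * (A ^ α * B ^ β) + (δ*CA) * (A ^ α * Z ^ β) +
      (C₁*(1+δ)) * (W ^ α * B ^ β) + (C₁*CA) * (W ^ α * Z ^ β) +
      δ * (A ^ α * B ^ β) + C₂ * (A ^ α * Z ^ β) := by ring
  have cA : δ*(1+δ) + δ + (δ*CA + C₂)*ε₁ ≤ ε := by nlinarith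
  have cB : δ*(1+δ) + δ + C₁*(1+δ)*ε₂ ≤ ε := by nlinarith
  have final := glue ε δ C₁ C₂ CA ε₁ ε₂ K₁ K₂ (A^(α+β)) (B^(α+β)) (W^(α+β)) (Z^(α+β))
    (A ^ α * B ^ β) (A ^ α * Z ^ β) (W ^ α * B ^ β) (W ^ α * Z ^ β)
    hδ.le hC₁ hC₂ hCA hK₁ hK₂ (Real.rpow_nonneg hA0 _) (Real.rpow_nonneg hB0 _)
    (Real.rpow_nonneg hW0 _) (Real.rpow_nonneg hZ0 _) cA cB y1 y2 y3 y4
  calc |(|a + w| ^ α * |b + z| ^ β - A ^ α * B ^ β)| ≤ _ := step2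
    _ = _ := expand
    _ ≤ _ := final

lemma lemP (q : ℝ) (hq : 0 ≤ q) (a b : ℝ) :
    |a - b| ^ q ≤ 2 ^ q * (|a| ^ q + |b| ^ q) := by
  have h2 : (0:ℝ) ≤ (2:ℝ) ^ q := Real.rpow_nonneg (by norm_num) q
  have ha : (0:ℝ) ≤ |a| ^ q := Real.rpow_nonneg (abs_nonneg _) q
  have hb : (0:ℝ) ≤ |b| ^ q := Real.rpow_nonneg (abs_nonneg _) q
  rcases le_total |a| |b| with h | h
  · have h1 : |a - b| ≤ 2 * |b| := by have := abs_sub a b; linarith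
    have h3 : |a - b| ^ q ≤ (2*|b|) ^ q := Real.rpow_le_rpow (abs_nonneg _) h1 hq
    rw [Real.mul_rpow (by norm_num) (abs_nonneg _)] at h3
    nlinarith
  · have h1 : |a - b| ≤ 2 * |a| := by have := abs_sub a b; linarith
    have h3 : |a - b| ^ q ≤ (2*|a|) ^ q := Real.rpow_le_rpow (abs_nonneg _) h1 hq
    rw [Real.mul_rpow (by norm_num) (abs_nonneg _)] at h3
    nlinarith

open MeasureTheory Filter
open scoped RealInnerProductSpace

theorem main (N : ℕ) (α β : ℝ) (hα : 1 < α) (hβ : 1 < β)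
    (un vn : ℕ → EuclideanSpace ℝ (Fin N) → ℝ)
    (u v : EuclideanSpace ℝ (Fin N) → ℝ)
    (haeu : ∀ᵐ x : EuclideanSpace ℝ (Fin N), Tendsto (fun n => un n x) atTop (nhds (u x)))
    (haev : ∀ᵐ x : EuclideanSpace ℝ (Fin N), Tendsto (fun n => vn n x) atTop (nhds (v x)))
    (hbu : ∃ C : ℝ, ∀ n, (∫ x, |un n x| ^ (α + β)) ≤ C)
    (hbv : ∃ C : ℝ, ∀ n, (∫ x, |vn n x| ^ (α + β)) ≤ C)
    (hmemu : ∀ n, MemLp (un n) (ENNReal.ofReal (α + β)) volume)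
    (hmemv : ∀ n, MemLp (vn n) (ENNReal.ofReal (α + β)) volume) :
    Tendsto (fun n => (∫ x, |un n x| ^ α * |vn n x| ^ β)
        - ∫ x, |un n x - u x| ^ α * |vn n x - v x| ^ β) atTop
      (nhds (∫ x, |u x| ^ α * |v x| ^ β)) := by
  obtain ⟨Cu, hCu⟩ := hbu
  obtain ⟨Cv, hCv⟩ := hbv
  have hα0 : (0:ℝ) < α := by linarith
  have hβ0 : (0:ℝ) < β := by linarith
  have hp0 : (0:ℝ) < α + β := by linarith
  -- measurability
  have hmu : ∀ n, AEStronglyMeasurable (un n) volume := fun n => (hmemu n).1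
  have hmv : ∀ n, AEStronglyMeasurable (vn n) volume := fun n => (hmemv n).1
  have hu : AEStronglyMeasurable u volume := aestronglyMeasurable_of_tendsto_ae atTop hmu haeu
  have hv : AEStronglyMeasurable v volume := aestronglyMeasurable_of_tendsto_ae atTop hmv haev
  have habs : ∀ (f : EuclideanSpace ℝ (Fin N) → ℝ), AEStronglyMeasurable f volume → ∀ γ : ℝ,
      AEStronglyMeasurable (fun x => |f x| ^ γ) volume := fun f hf γ =>
    by
    have h1 : AEMeasurable (fun x => ‖f x‖ ^ γ) volume :=
      hf.aemeasurable.norm.pow (aemeasurable_const (b := γ))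
    have h2 : AEMeasurable (fun x => |f x| ^ γ) volume :=
      h1.congr (ae_of_all _ fun x => by simp [Real.norm_eq_abs])
    exact h2.aestronglyMeasurable
  -- integrability of p-th powers
  have hintp : ∀ (f : EuclideanSpace ℝ (Fin N) → ℝ), MemLp f (ENNReal.ofReal (α+β)) volume →
      Integrable (fun x => |f x| ^ (α+β)) volume := by
    intro f hf
    have h := hf.integrable_norm_rpow (by simp [ENNReal.ofReal_eq_zero]; linarith)
      ENNReal.ofReal_ne_top
    simpa [ENNReal.toReal_ofReal hp0.le, Real.norm_eq_abs] using h
  have hiun : ∀ n, Integrable (fun x => |un n x| ^ (α+β)) volume := fun n => hintp _ (hmemu n)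
  have hivn : ∀ n, Integrable (fun x => |vn n x| ^ (α+β)) volume := fun n => hintp _ (hmemv n)
  -- Fatou: limits are in L^p
  have hfatou : ∀ (w : EuclideanSpace ℝ (Fin N) → ℝ) (wn : ℕ → EuclideanSpace ℝ (Fin N) → ℝ)
      (Cw : ℝ), (∀ n, AEStronglyMeasurable (wn n) volume) → AEStronglyMeasurable w volume →
      (∀ n, Integrable (fun x => |wn n x| ^ (α+β)) volume) →
      (∀ n, (∫ x, |wn n x| ^ (α + β)) ≤ Cw) →
      (∀ᵐ x : EuclideanSpace ℝ (Fin N), Tendsto (fun n => wn n x) atTop (nhds (w x))) →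
      Integrable (fun x => |w x| ^ (α+β)) volume := by
    intro w wn Cw hmw hw hiw hCw haew
    refine ⟨habs w hw _, ?_⟩
    rw [hasFiniteIntegral_iff_ofReal (ae_of_all _ fun x => by positivity)]
    have haeq : ∀ᵐ x : EuclideanSpace ℝ (Fin N),
        Tendsto (fun n => ENNReal.ofReal (|wn n x| ^ (α+β))) atTop
          (nhds (ENNReal.ofReal (|w x| ^ (α+β)))) := by
      refine haew.mono fun x hx => ?_
      exact (ENNReal.continuous_ofReal.continuousAt).tendsto.comp
        ((hx.abs).rpow_const (Or.inr hp0.le))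
    calc ∫⁻ x, ENNReal.ofReal (|w x| ^ (α+β))
        = ∫⁻ x, liminf (fun n => ENNReal.ofReal (|wn n x| ^ (α+β))) atTop :=
          lintegral_congr_ae (haeq.mono fun x hx => hx.liminf_eq.symm)
      _ ≤ liminf (fun n => ∫⁻ x, ENNReal.ofReal (|wn n x| ^ (α+β))) atTop :=
          lintegral_liminf_le' fun n =>
            ((habs (wn n) (hmw n) (α+β)).aemeasurable).ennreal_ofReal
      _ ≤ ENNReal.ofReal Cw := by
          have hb : ∀ n, (∫⁻ x, ENNReal.ofReal (|wn n x| ^ (α+β))) ≤ ENNReal.ofReal Cw := by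
            intro n
            rw [← ofReal_integral_eq_lintegral_ofReal (hiw n)
              (ae_of_all _ fun x => by positivity)]
            exact ENNReal.ofReal_le_ofReal (hCw n)
          calc liminf (fun n => ∫⁻ x, ENNReal.ofReal (|wn n x| ^ (α+β))) atTop
              ≤ liminf (fun _ : ℕ => ENNReal.ofReal Cw) atTop :=
                liminf_le_liminf (Eventually.of_forall hb)
            _ = ENNReal.ofReal Cw := liminf_const _
      _ < ⊤ := ENNReal.ofReal_lt_top
  have hiu : Integrable (fun x => |u x| ^ (α+β)) volume :=
    hfatou u un Cu hmu hu hiun hCu haeu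
  have hiv : Integrable (fun x => |v x| ^ (α+β)) volume :=
    hfatou v vn Cv hmv hv hivn hCv haev
  -- integrability of difference powers
  have hiaun : ∀ n, Integrable (fun x => |un n x - u x| ^ (α+β)) volume := by
    intro n
    refine Integrable.mono' (((hiun n).add hiu).const_mul (2 ^ (α+β)))
      (habs _ ((hmu n).sub hu) _) (ae_of_all _ fun x => ?_)
    rw [Real.norm_eq_abs, abs_of_nonneg (by positivity)]
    exact lemP (α+β) hp0.le _ _
  have hiavn : ∀ n, Integrable (fun x => |vn n x - v x| ^ (α+β)) volume := by
    intro n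
    refine Integrable.mono' (((hivn n).add hiv).const_mul (2 ^ (α+β)))
      (habs _ ((hmv n).sub hv) _) (ae_of_all _ fun x => ?_)
    rw [Real.norm_eq_abs, abs_of_nonneg (by positivity)]
    exact lemP (α+β) hp0.le _ _
  -- integrability of the products
  have hprod : ∀ (f g : EuclideanSpace ℝ (Fin N) → ℝ),
      AEStronglyMeasurable f volume → AEStronglyMeasurable g volume →
      Integrable (fun x => |f x| ^ (α+β)) volume → Integrable (fun x => |g x| ^ (α+β)) volume →
      Integrable (fun x => |f x| ^ α * |g x| ^ β) volume := by
    intro f g hf hg hif hig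
    refine Integrable.mono' (hif.add hig) ((habs f hf α).mul (habs g hg β))
      (ae_of_all _ fun x => ?_)
    rw [Real.norm_eq_abs, abs_of_nonneg (by positivity)]
    exact lemB α β hα0 hβ0 _ _ (abs_nonneg _) (abs_nonneg _)
  have hif : ∀ n, Integrable (fun x => |un n x| ^ α * |vn n x| ^ β) volume :=
    fun n => hprod _ _ (hmu n) (hmv n) (hiun n) (hivn n)
  have hig : ∀ n, Integrable (fun x => |un n x - u x| ^ α * |vn n x - v x| ^ β) volume :=
    fun n => hprod _ _ ((hmu n).sub hu) ((hmv n).sub hv) (hiaun n) (hiavn n)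
  have hih : Integrable (fun x => |u x| ^ α * |v x| ^ β) volume :=
    hprod _ _ hu hv hiu hiv
  -- uniform bound on the L^p norms of the differences
  have hIau : ∀ n, (∫ x, |un n x - u x| ^ (α+β)) ≤
      2 ^ (α+β) * (Cu + ∫ x, |u x| ^ (α+β)) := by
    intro n
    calc (∫ x, |un n x - u x| ^ (α+β))
        ≤ ∫ x, 2 ^ (α+β) * (|un n x| ^ (α+β) + |u x| ^ (α+β)) :=
          integral_mono (hiaun n) (((hiun n).add hiu).const_mul _)
            (fun x => lemP (α+β) hp0.le _ _)
      _ = 2 ^ (α+β) * ((∫ x, |un n x| ^ (α+β)) + ∫ x, |u x| ^ (α+β)) := by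
          rw [integral_const_mul, integral_add (hiun n) hiu]
      _ ≤ 2 ^ (α+β) * (Cu + ∫ x, |u x| ^ (α+β)) := by
          have h2 : (0:ℝ) ≤ (2:ℝ) ^ (α+β) := Real.rpow_nonneg (by norm_num) _
          have := hCu n
          nlinarith
  have hIav : ∀ n, (∫ x, |vn n x - v x| ^ (α+β)) ≤
      2 ^ (α+β) * (Cv + ∫ x, |v x| ^ (α+β)) := by
    intro n
    calc (∫ x, |vn n x - v x| ^ (α+β))
        ≤ ∫ x, 2 ^ (α+β) * (|vn n x| ^ (α+β) + |v x| ^ (α+β)) :=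
          integral_mono (hiavn n) (((hivn n).add hiv).const_mul _)
            (fun x => lemP (α+β) hp0.le _ _)
      _ = 2 ^ (α+β) * ((∫ x, |vn n x| ^ (α+β)) + ∫ x, |v x| ^ (α+β)) := by
          rw [integral_const_mul, integral_add (hivn n) hiv]
      _ ≤ 2 ^ (α+β) * (Cv + ∫ x, |v x| ^ (α+β)) := by
          have h2 : (0:ℝ) ≤ (2:ℝ) ^ (α+β) := Real.rpow_nonneg (by norm_num) _
          have := hCv n
          nlinarith
  set D : ℝ := 2 ^ (α+β) * (Cu + ∫ x, |u x| ^ (α+β)) +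
      2 ^ (α+β) * (Cv + ∫ x, |v x| ^ (α+β)) with hDdef
  have hD0 : 0 ≤ D := by
    have h1 := hIau 0
    have h2 := hIav 0
    have h3 : (0:ℝ) ≤ ∫ x, |un 0 x - u x| ^ (α+β) :=
      integral_nonneg fun x => by positivity
    have h4 : (0:ℝ) ≤ ∫ x, |vn 0 x - v x| ^ (α+β) :=
      integral_nonneg fun x => by positivity
    rw [hDdef]; linarith
  have hDsum : ∀ n, (∫ x, |un n x - u x| ^ (α+β)) + (∫ x, |vn n x - v x| ^ (α+β)) ≤ D := by
    intro n; rw [hDdef]; linarith [hIau n, hIav n]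
  clear_value D
  -- main estimate
  rw [Metric.tendsto_atTop]
  intro ε hε
  have h2D : (0:ℝ) < 2*(D+1) := by linarith
  obtain ⟨ε', hε'pos, hε'D⟩ : ∃ ε' : ℝ, 0 < ε' ∧ ε' * D < ε/2 := by
    refine ⟨ε/(2*(D+1)), div_pos hε h2D, ?_⟩
    rw [div_mul_eq_mul_div, div_lt_div_iff₀ h2D (by norm_num)]
    nlinarith
  obtain ⟨Cs, hCs, hstar⟩ := star α β hα0 hβ0 ε' hε'pos
  -- pointwise bound
  have hptw : ∀ n x, |(|un n x| ^ α * |vn n x| ^ β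
      - |un n x - u x| ^ α * |vn n x - v x| ^ β - |u x| ^ α * |v x| ^ β)| ≤
      ε' * (|un n x - u x| ^ (α+β) + |vn n x - v x| ^ (α+β))
        + (Cs+1) * (|u x| ^ (α+β) + |v x| ^ (α+β)) := by
    intro n x
    have h1 := hstar (un n x - u x) (u x) (vn n x - v x) (v x)
    rw [sub_add_cancel, sub_add_cancel] at h1
    have h2 : |u x| ^ α * |v x| ^ β ≤ |u x| ^ (α+β) + |v x| ^ (α+β) :=
      lemB α β hα0 hβ0 _ _ (abs_nonneg _) (abs_nonneg _)
    have h3 : |(|un n x| ^ α * |vn n x| ^ β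
        - |un n x - u x| ^ α * |vn n x - v x| ^ β - |u x| ^ α * |v x| ^ β)| ≤
        |(|un n x| ^ α * |vn n x| ^ β - |un n x - u x| ^ α * |vn n x - v x| ^ β)|
          + |(|u x| ^ α * |v x| ^ β)| := abs_sub _ _
    rw [abs_of_nonneg (by positivity : (0:ℝ) ≤ |u x| ^ α * |v x| ^ β)] at h3
    linarith
  -- the truncated sequence
  set Z : ℕ → EuclideanSpace ℝ (Fin N) → ℝ := fun n x =>
    max (|(|un n x| ^ α * |vn n x| ^ β
      - |un n x - u x| ^ α * |vn n x - v x| ^ β - |u x| ^ α * |v x| ^ β)|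
      - ε' * (|un n x - u x| ^ (α+β) + |vn n x - v x| ^ (α+β))) 0 with hZdef
  have habs2 : ∀ (f : EuclideanSpace ℝ (Fin N) → ℝ), AEMeasurable f volume →
      AEMeasurable (fun x => |f x|) volume := fun f hf =>
    hf.norm.congr (ae_of_all _ fun x => by simp [Real.norm_eq_abs])
  have hZaem : ∀ n, AEMeasurable (Z n) volume := by
    intro n
    have hFm : AEMeasurable (fun x => |un n x| ^ α * |vn n x| ^ β) volume :=
      ((habs _ (hmu n) α).mul (habs _ (hmv n) β)).aemeasurable
    have hGm : AEMeasurable (fun x => |un n x - u x| ^ α * |vn n x - v x| ^ β) volume :=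
      ((habs _ ((hmu n).sub hu) α).mul (habs _ ((hmv n).sub hv) β)).aemeasurable
    have hHm : AEMeasurable (fun x => |u x| ^ α * |v x| ^ β) volume :=
      ((habs _ hu α).mul (habs _ hv β)).aemeasurable
    have hW : AEMeasurable (fun x => |(|un n x| ^ α * |vn n x| ^ β
        - |un n x - u x| ^ α * |vn n x - v x| ^ β - |u x| ^ α * |v x| ^ β)|) volume :=
      habs2 _ ((hFm.sub hGm).sub hHm)
    have hpen : AEMeasurable (fun x =>
        ε' * (|un n x - u x| ^ (α+β) + |vn n x - v x| ^ (α+β))) volume :=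
      (aemeasurable_const.mul (((habs _ ((hmu n).sub hu) (α+β)).aemeasurable).add
        ((habs _ ((hmv n).sub hv) (α+β)).aemeasurable)))
    exact (hW.sub hpen).max aemeasurable_const
  have hZnonneg : ∀ n x, 0 ≤ Z n x := fun n x => le_max_right _ _
  have hbint : Integrable (fun x => (Cs+1) * (|u x| ^ (α+β) + |v x| ^ (α+β))) volume :=
    (hiu.add hiv).const_mul _
  have hZbound : ∀ n, ∀ᵐ x : EuclideanSpace ℝ (Fin N),
      ‖Z n x‖ ≤ (Cs+1) * (|u x| ^ (α+β) + |v x| ^ (α+β)) := by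
    intro n
    refine ae_of_all _ fun x => ?_
    rw [Real.norm_eq_abs, abs_of_nonneg (hZnonneg n x)]
    refine max_le ?_ (by positivity)
    have := hptw n x
    linarith
  have hZlim : ∀ᵐ x : EuclideanSpace ℝ (Fin N),
      Tendsto (fun n => Z n x) atTop (nhds 0) := by
    filter_upwards [haeu, haev] with x hx hy
    have hun0 : Tendsto (fun n => un n x - u x) atTop (nhds 0) := by
      simpa using hx.sub (tendsto_const_nhds (x := u x))
    have hvn0 : Tendsto (fun n => vn n x - v x) atTop (nhds 0) := by
      simpa using hy.sub (tendsto_const_nhds (x := v x))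
    have hF : Tendsto (fun n => |un n x| ^ α * |vn n x| ^ β) atTop
        (nhds (|u x| ^ α * |v x| ^ β)) :=
      (hx.abs.rpow_const (Or.inr hα0.le)).mul (hy.abs.rpow_const (Or.inr hβ0.le))
    have hG : Tendsto (fun n => |un n x - u x| ^ α * |vn n x - v x| ^ β) atTop
        (nhds 0) := by
      have h1 := (hun0.abs.rpow_const (Or.inr hα0.le)).mul
        (hvn0.abs.rpow_const (Or.inr hβ0.le))
      simpa [Real.zero_rpow hα0.ne'] using h1
    have hW : Tendsto (fun n => |(|un n x| ^ α * |vn n x| ^ β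
        - |un n x - u x| ^ α * |vn n x - v x| ^ β - |u x| ^ α * |v x| ^ β)|) atTop
        (nhds 0) := by
      have h1 := ((hF.sub hG).sub (tendsto_const_nhds (x := |u x| ^ α * |v x| ^ β))).abs
      simpa using h1
    refine tendsto_of_tendsto_of_tendsto_of_le_of_le tendsto_const_nhds hW
      (fun n => hZnonneg n x) (fun n => ?_)
    refine max_le (by
      have : (0:ℝ) ≤ ε' * (|un n x - u x| ^ (α+β) + |vn n x - v x| ^ (α+β)) := by positivity
      linarith) (abs_nonneg _)
  have hZint : ∀ n, Integrable (Z n) volume := fun n =>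
    Integrable.mono' hbint (hZaem n).aestronglyMeasurable (hZbound n)
  have hdom := tendsto_integral_of_dominated_convergence _
    (fun n => (hZaem n).aestronglyMeasurable) hbint hZbound hZlim
  rw [integral_zero] at hdom
  obtain ⟨Nn, hNn⟩ := (Metric.tendsto_atTop.1 hdom) (ε/2) (half_pos hε)
  refine ⟨Nn, fun n hn => ?_⟩
  have hZn : (∫ x, Z n x) < ε/2 := by
    have h1 := hNn n hn
    rw [Real.dist_eq, sub_zero, abs_of_nonneg (integral_nonneg fun x => hZnonneg n x)] at h1
    simpa using h1
  clear_value Z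
  rw [Real.dist_eq]
  have hsplit : (∫ x, (|un n x| ^ α * |vn n x| ^ β
      - |un n x - u x| ^ α * |vn n x - v x| ^ β - |u x| ^ α * |v x| ^ β)) =
      (∫ x, |un n x| ^ α * |vn n x| ^ β)
        - (∫ x, |un n x - u x| ^ α * |vn n x - v x| ^ β) - ∫ x, |u x| ^ α * |v x| ^ β := by
    have hFGint : Integrable (fun x => |un n x| ^ α * |vn n x| ^ β
        - |un n x - u x| ^ α * |vn n x - v x| ^ β) volume := (hif n).sub (hig n)
    have e1 : (∫ x, (|un n x| ^ α * |vn n x| ^ β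
        - |un n x - u x| ^ α * |vn n x - v x| ^ β - |u x| ^ α * |v x| ^ β)) =
        (∫ x, (|un n x| ^ α * |vn n x| ^ β - |un n x - u x| ^ α * |vn n x - v x| ^ β))
          - ∫ x, |u x| ^ α * |v x| ^ β := integral_sub hFGint hih
    have e2 : (∫ x, (|un n x| ^ α * |vn n x| ^ β
        - |un n x - u x| ^ α * |vn n x - v x| ^ β)) =
        (∫ x, |un n x| ^ α * |vn n x| ^ β)
          - ∫ x, |un n x - u x| ^ α * |vn n x - v x| ^ β := integral_sub (hif n) (hig n)
    rw [e1, e2]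
  have hpenint : Integrable (fun x =>
      ε' * (|un n x - u x| ^ (α+β) + |vn n x - v x| ^ (α+β))) volume :=
    ((hiaun n).add (hiavn n)).const_mul _
  calc |(∫ x, |un n x| ^ α * |vn n x| ^ β)
        - (∫ x, |un n x - u x| ^ α * |vn n x - v x| ^ β) - ∫ x, |u x| ^ α * |v x| ^ β|
      = |∫ x, (|un n x| ^ α * |vn n x| ^ β
          - |un n x - u x| ^ α * |vn n x - v x| ^ β - |u x| ^ α * |v x| ^ β)| := by
        rw [hsplit]
    _ ≤ ∫ x, |(|un n x| ^ α * |vn n x| ^ β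
          - |un n x - u x| ^ α * |vn n x - v x| ^ β - |u x| ^ α * |v x| ^ β)| := by
        simpa [Real.norm_eq_abs] using norm_integral_le_integral_norm
          (fun x => (|un n x| ^ α * |vn n x| ^ β
            - |un n x - u x| ^ α * |vn n x - v x| ^ β - |u x| ^ α * |v x| ^ β))
    _ ≤ ∫ x, (Z n x + ε' * (|un n x - u x| ^ (α+β) + |vn n x - v x| ^ (α+β))) := by
        refine integral_mono ((((hif n).sub (hig n)).sub hih).abs) ((hZint n).add hpenint)
          (fun x => ?_)
        have h1 : |(|un n x| ^ α * |vn n x| ^ β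
            - |un n x - u x| ^ α * |vn n x - v x| ^ β - |u x| ^ α * |v x| ^ β)|
            - ε' * (|un n x - u x| ^ (α+β) + |vn n x - v x| ^ (α+β)) ≤ Z n x := by
          simp only [hZdef]; exact le_max_left _ _
        simp only [Real.norm_eq_abs]
        linarith
    _ = (∫ x, Z n x) + ε' * ((∫ x, |un n x - u x| ^ (α+β))
          + ∫ x, |vn n x - v x| ^ (α+β)) := by
        rw [integral_add (hZint n) hpenint, integral_const_mul,
          integral_add (hiaun n) (hiavn n)]
    _ < ε/2 + ε/2 := by
        have heta : MeasureTheory.integral volume (Z n) = ∫ x, Z n x := rfl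
        have h1 := hDsum n
        have h2 : ε' * ((∫ x, |un n x - u x| ^ (α+β)) + ∫ x, |vn n x - v x| ^ (α+β))
            ≤ ε' * D := mul_le_mul_of_nonneg_left h1 hε'pos.le
        have := hε'D
        linarith [heta]
    _ = ε := add_halves ε

theorem stmt_6 (N : ℕ) (hN : 3 ≤ N) (α β : ℝ) (hα : 1 < α) (hβ : 1 < β)
    (un vn : ℕ → EuclideanSpace ℝ (Fin N) → ℝ)
    (u v : EuclideanSpace ℝ (Fin N) → ℝ)
    (hwu : WeakH1Conv N un u) (hwv : WeakH1Conv N vn v)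
    (haeu : ∀ᵐ x : EuclideanSpace ℝ (Fin N), Tendsto (fun n => un n x) atTop (nhds (u x)))
    (haev : ∀ᵐ x : EuclideanSpace ℝ (Fin N), Tendsto (fun n => vn n x) atTop (nhds (v x)))
    (hbu : ∃ C : ℝ, ∀ n, (∫ x, |un n x| ^ (α + β)) ≤ C)
    (hbv : ∃ C : ℝ, ∀ n, (∫ x, |vn n x| ^ (α + β)) ≤ C)
    (hmemu : ∀ n, MemLp (un n) (ENNReal.ofReal (α + β)) volume)
    (hmemv : ∀ n, MemLp (vn n) (ENNReal.ofReal (α + β)) volume) :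
    Tendsto (fun n => (∫ x, |un n x| ^ α * |vn n x| ^ β)
        - ∫ x, |un n x - u x| ^ α * |vn n x - v x| ^ β) atTop
      (nhds (∫ x, |u x| ^ α * |v x| ^ β)) :=
  main N α β hα hβ un vn u v haeu haev hbu hbv hmemu hmemv
end

section
/- Let $a_1,a_2\geq0$ with $a_1+a_2>0$, $b>0$, $N\geq3$, $p\in(2,\frac{4N}{N-2})$, and suppose $G(1)<0$ where $G(t)=\frac{N}{2}t^Na_1+\frac{N+2}{2}t^{N+2}a_2-\frac{2(N+p)}{p}t^{N+p}b$. Then there exists a unique $t_0\in(0,1)$ with $G(t_0)=0$. -/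
/-!
Writing `G(t) = A t^a + B t^b - C t^c` with `a ≤ b < c`, the zeros of `G` on `(0, ∞)` are those of
`G(t) / t^b = A t^(a-b) + B - C t^(c-b)`, which is strictly decreasing. It is positive for small `t`
(its first two terms are at least `A + B > 0` on `(0, 1]`, the last tends to `0`) and negative at
`t = 1`, so it has exactly one zero in `(0, 1)`.
-/
open Real Set Filter Topology

noncomputable def rpowTrinomial (A B C a b c t : ℝ) : ℝ := A * t ^ a + B * t ^ b - C * t ^ c

section
variable {A B C a b c : ℝ}

lemma rpowTrinomial_one : rpowTrinomial A B C a b c 1 = A + B - C := by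
  simp [rpowTrinomial]

lemma rpowTrinomial_eq_rpow_mul {t : ℝ} (ht : 0 < t) :
    rpowTrinomial A B C a b c t = t ^ b * rpowTrinomial A B C (a - b) 0 (c - b) t := by
  simp only [rpowTrinomial, rpow_sub ht, rpow_zero]
  field_simp

lemma continuousOn_rpowTrinomial : ContinuousOn (rpowTrinomial A B C a b c) (Ioi 0) := by
  intro t ht
  have h : ∀ q : ℝ, ContinuousAt (fun x : ℝ => x ^ q) t :=
    fun q => continuousAt_rpow_const t q (Or.inl (ne_of_gt ht))
  exact (((continuousAt_const.mul (h a)).add (continuousAt_const.mul (h b))).sub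
    (continuousAt_const.mul (h c))).continuousWithinAt

lemma strictAntiOn_rpowTrinomial (hA : 0 ≤ A) (hB : 0 ≤ B) (hC : 0 < C)
    (ha : a ≤ 0) (hb : b ≤ 0) (hc : 0 < c) :
    StrictAntiOn (rpowTrinomial A B C a b c) (Ioi 0) := by
  intro s hs t _ hst
  have h₁ : t ^ a ≤ s ^ a := rpow_le_rpow_of_nonpos hs hst.le ha
  have h₂ : t ^ b ≤ s ^ b := rpow_le_rpow_of_nonpos hs hst.le hb
  have h₃ : s ^ c < t ^ c := rpow_lt_rpow (le_of_lt hs) hst hc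
  simp only [rpowTrinomial]
  linarith [mul_le_mul_of_nonneg_left h₁ hA, mul_le_mul_of_nonneg_left h₂ hB,
    mul_lt_mul_of_pos_left h₃ hC]

lemma exists_pos_rpowTrinomial (hA : 0 ≤ A) (hB : 0 ≤ B) (hAB : 0 < A + B)
    (ha : a ≤ 0) (hb : b ≤ 0) (hc : 0 < c) :
    ∃ ε ∈ Ioo 0 1, 0 < rpowTrinomial A B C a b c ε := by
  have hlim : Tendsto (fun t : ℝ => C * t ^ c) (𝓝[>] 0) (𝓝 0) := by
    have := ((continuous_rpow_const hc.le).tendsto 0).const_mul C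
    rw [zero_rpow hc.ne', mul_zero] at this
    exact this.mono_left nhdsWithin_le_nhds
  obtain ⟨ε, hCε, hε⟩ :=
    ((hlim.eventually (gt_mem_nhds hAB)).and (Ioo_mem_nhdsGT one_pos)).exists
  refine ⟨ε, hε, ?_⟩
  have h₁ : 1 ≤ ε ^ a := one_le_rpow_of_pos_of_le_one_of_nonpos hε.1 hε.2.le ha
  have h₂ : 1 ≤ ε ^ b := one_le_rpow_of_pos_of_le_one_of_nonpos hε.1 hε.2.le hb
  simp only [rpowTrinomial]
  linarith [mul_le_mul_of_nonneg_left h₁ hA, mul_le_mul_of_nonneg_left h₂ hB]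

lemma existsUnique_rpowTrinomial_eq_zero_of_nonpos (hA : 0 ≤ A) (hB : 0 ≤ B) (hAB : 0 < A + B)
    (ha : a ≤ 0) (hb : b ≤ 0) (hc : 0 < c) (hABC : A + B - C < 0) :
    ∃! t, t ∈ Ioo 0 1 ∧ rpowTrinomial A B C a b c t = 0 := by
  obtain ⟨ε, hε, hfε⟩ := exists_pos_rpowTrinomial hA hB hAB ha hb hc
  have hcont : ContinuousOn (rpowTrinomial A B C a b c) (Icc ε 1) :=
    continuousOn_rpowTrinomial.mono fun t ht => hε.1.trans_le ht.1
  have hf1 : rpowTrinomial A B C a b c 1 < 0 := rpowTrinomial_one.trans_lt hABC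
  obtain ⟨t, ht, hft⟩ := intermediate_value_Ioo' hε.2.le hcont ⟨hf1, hfε⟩
  have ht₀ : 0 < t := hε.1.trans ht.1
  have hanti := strictAntiOn_rpowTrinomial hA hB (by linarith : 0 < C) ha hb hc
  refine ⟨t, ⟨⟨ht₀, ht.2⟩, hft⟩, fun s ⟨hs, hfs⟩ => ?_⟩
  exact hanti.injOn hs.1 ht₀ (hfs.trans hft.symm)

theorem existsUnique_rpowTrinomial_eq_zero (hA : 0 ≤ A) (hB : 0 ≤ B) (hAB : 0 < A + B)
    (hab : a ≤ b) (hbc : b < c) (hABC : A + B - C < 0) :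
    ∃! t, t ∈ Ioo 0 1 ∧ rpowTrinomial A B C a b c t = 0 := by
  refine (existsUnique_congr fun t => and_congr_right fun ht => ?_).2
    (existsUnique_rpowTrinomial_eq_zero_of_nonpos hA hB hAB (sub_nonpos.2 hab) le_rfl
      (sub_pos.2 hbc) hABC)
  rw [rpowTrinomial_eq_rpow_mul ht.1, mul_eq_zero, or_iff_right (rpow_pos_of_pos ht.1 b).ne']

end

theorem stmt_12_general (N : ℕ) (hN : 3 ≤ N) (p a₁ a₂ b : ℝ)
    (hp : 2 < p)
    (ha₁ : 0 ≤ a₁) (ha₂ : 0 ≤ a₂) (hsum : 0 < a₁ + a₂)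
    (hG1 : (N : ℝ) / 2 * a₁ + ((N : ℝ) + 2) / 2 * a₂ - 2 * ((N : ℝ) + p) / p * b < 0) :
    ∃! t₀ : ℝ, t₀ ∈ Set.Ioo (0 : ℝ) 1 ∧
      (N : ℝ) / 2 * t₀ ^ (N : ℝ) * a₁ + ((N : ℝ) + 2) / 2 * t₀ ^ ((N : ℝ) + 2) * a₂
        - 2 * ((N : ℝ) + p) / p * t₀ ^ ((N : ℝ) + p) * b = 0 := by
  have hN₀ : (0 : ℝ) < N := by exact_mod_cast (by omega : 0 < N)
  have h := existsUnique_rpowTrinomial_eq_zero (A := N / 2 * a₁) (B := (N + 2) / 2 * a₂)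
    (C := 2 * (N + p) / p * b) (a := N) (b := N + 2) (c := N + p)
    (by positivity) (by positivity) (by nlinarith) (by linarith) (by linarith) hG1
  simp only [rpowTrinomial] at h
  convert h using 4 with t
  ring

theorem stmt_12 (N : ℕ) (hN : 3 ≤ N) (p a₁ a₂ b : ℝ)
    (hp : 2 < p) (hp' : p < 4 * (N : ℝ) / ((N : ℝ) - 2))
    (ha₁ : 0 ≤ a₁) (ha₂ : 0 ≤ a₂) (hsum : 0 < a₁ + a₂) (hb : 0 < b)
    (hG1 : (N : ℝ) / 2 * a₁ + ((N : ℝ) + 2) / 2 * a₂ - 2 * ((N : ℝ) + p) / p * b < 0) :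
    ∃! t₀ : ℝ, t₀ ∈ Set.Ioo (0 : ℝ) 1 ∧
      (N : ℝ) / 2 * t₀ ^ (N : ℝ) * a₁ + ((N : ℝ) + 2) / 2 * t₀ ^ ((N : ℝ) + 2) * a₂
        - 2 * ((N : ℝ) + p) / p * t₀ ^ ((N : ℝ) + p) * b = 0 :=
  stmt_12_general N hN p a₁ a₂ b hp ha₁ ha₂ hsum hG1
end
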